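/- arXiv:2503.03019 — 10 statements merged into one kernel-verified Lean document; each statement's English description precedes it below -/
import Mathlib

section
/- For every time step τ with 0 < τ ≤ 2, every mesh size h > 0, and every η ∈ (0,1], one has Q_c(τ,h,η) := exp(−8τη/h²) + (h²(1−η)/(4η))·(exp(−4τη/h²) − 1)² ≤ 1. (This is the stability of the ETD-RK1 time discretization of the central finite-difference scheme for the dimensionless advection–diffusion equation: the squared modulus of the Fourier growth factor is at most 1.) -/
/-!
With `x = 4τη/h²` and `E = exp (-x)` the quantity is `E² + τ(1 - η)(1 - E)²/x`, so it is at most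
`1 = E² + (1 - E)(1 + E)` as soon as `τ(1 - η)(1 - E) ≤ x(1 + E)`. Since `τ(1 - η) ≤ 2`, this
follows from `tanh (x/2) ≤ x/2`.
-/

open Real Set

/-- `tanh (x / 2) ≤ x / 2` for `x ≥ 0`, with the denominators cleared. -/
theorem two_mul_one_sub_exp_neg_le {x : ℝ} (hx : 0 ≤ x) :
    2 * (1 - exp (-x)) ≤ x * (1 + exp (-x)) := by
  set f : ℝ → ℝ := fun y ↦ y * (1 + exp (-y)) - 2 * (1 - exp (-y))
  have hf' (y : ℝ) : HasDerivAt f (1 - (1 + y) * exp (-y)) y := by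
    have he : HasDerivAt (fun y ↦ exp (-y)) (-exp (-y)) y := by
      simpa using (hasDerivAt_neg y).exp
    exact (((hasDerivAt_id' y).mul (he.const_add 1)).sub
      ((he.const_sub 1).const_mul 2)).congr_deriv (by ring)
  have hmono : MonotoneOn f (Ici 0) := by
    refine monotoneOn_of_deriv_nonneg (convex_Ici 0)
      (fun y _ ↦ (hf' y).continuousAt.continuousWithinAt)
      (fun y _ ↦ (hf' y).differentiableAt.differentiableWithinAt) fun y _ ↦ ?_
    rw [(hf' y).deriv, sub_nonneg]
    calc (1 + y) * exp (-y) ≤ exp y * exp (-y) := by gcongr; linarith [add_one_le_exp y]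
      _ = 1 := by rw [← exp_add, add_neg_cancel, exp_zero]
  simpa [f] using hmono self_mem_Ici hx hx

theorem exp_neg_sq_add_div_mul_sq_le_one {x c : ℝ} (hx : 0 < x) (hc : c ≤ 2) :
    exp (-x) ^ 2 + c / x * (exp (-x) - 1) ^ 2 ≤ 1 := by
  have hE : exp (-x) ≤ 1 := exp_le_one_iff.mpr (by linarith)
  have htanh := two_mul_one_sub_exp_neg_le hx.le
  have hcleared : c * (exp (-x) - 1) ^ 2 ≤ x * (1 - exp (-x) ^ 2) := by
    nlinarith [mul_le_mul_of_nonneg_right hc (sq_nonneg (exp (-x) - 1)),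
      mul_le_mul_of_nonneg_right htanh (sub_nonneg.mpr hE)]
  rw [div_mul_eq_mul_div, ← le_sub_iff_add_le', div_le_iff₀ hx]
  linarith

theorem etdrk1_central_stability_general
    (τ h η : ℝ) (hτ0 : 0 < τ) (hτ2 : τ ≤ 2) (hh : 0 < h)
    (hη0 : 0 < η) :
    Real.exp (-8 * τ * η / h ^ 2) +
      (h ^ 2 * (1 - η) / (4 * η)) * (Real.exp (-4 * τ * η / h ^ 2) - 1) ^ 2 ≤ 1 := by
  have h8 : exp (-8 * τ * η / h ^ 2) = exp (-(4 * τ * η / h ^ 2)) ^ 2 := by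
    rw [← exp_nat_mul]; congr 1; push_cast; ring
  have h4 : -4 * τ * η / h ^ 2 = -(4 * τ * η / h ^ 2) := by ring
  have hcoef : h ^ 2 * (1 - η) / (4 * η) = τ * (1 - η) / (4 * τ * η / h ^ 2) := by
    field_simp
  rw [h8, h4, hcoef]
  exact exp_neg_sq_add_div_mul_sq_le_one (by positivity) (by nlinarith)

/-- Stability of the ETD-RK1 time discretization of the central finite-difference
scheme for the dimensionless advection–diffusion equation `u_t + u_x = u_{xx}`:
for every time step `0 < τ ≤ 2`, mesh size `h > 0`, and `η ∈ (0,1]`, the squared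
modulus of the Fourier growth factor
`Q_c(τ,h,η) = exp(−8τη/h²) + (h²(1−η)/(4η))·(exp(−4τη/h²) − 1)²` is at most 1. -/
theorem etdrk1_central_stability
    (τ h η : ℝ) (hτ0 : 0 < τ) (hτ2 : τ ≤ 2) (hh : 0 < h)
    (hη0 : 0 < η) (hη1 : η ≤ 1) :
    Real.exp (-8 * τ * η / h ^ 2) +
      (h ^ 2 * (1 - η) / (4 * η)) * (Real.exp (-4 * τ * η / h ^ 2) - 1) ^ 2 ≤ 1 :=
  etdrk1_central_stability_general τ h η hτ0 hτ2 hh hη0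
end

section
/- For every τ with 0 < τ ≤ 2 and every h > 0, the function η ↦ Q_c(τ,h,η) is nonincreasing on (0,1]: if 0 < η₁ ≤ η₂ ≤ 1 then Q_c(τ,h,η₂) ≤ Q_c(τ,h,η₁). -/
/-!
With `x = 4τη/h²`, and since `h²(1 - η)/(4η) = τ/x - h²/4`,
`Q_c = e^{-2x} + τ (1 - e^{-x})²/x - (h²/4) (1 - e^{-x})²`.
The subtracted square increases with `x`. The first two terms decrease for `0 ≤ τ ≤ 2`:
writing `e = e^{-x}`, their derivative times `x²` is
`-(τ (x e - (1 - e))² + (2 - τ) x² e²) ≤ 0`.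
-/

open Real Set

lemma sq_one_sub_exp_neg_monotoneOn : MonotoneOn (fun x : ℝ => (1 - exp (-x)) ^ 2) (Ici 0) := by
  intro x hx y _ hxy
  have hexp_anti : exp (-y) ≤ exp (-x) := exp_le_exp.mpr (neg_le_neg hxy)
  have hexp_le_one : exp (-x) ≤ 1 := exp_le_one_iff.mpr (neg_nonpos.mpr hx)
  exact pow_le_pow_left₀ (sub_nonneg.mpr hexp_le_one) (by linarith) 2

lemma mul_two_mul_one_sub_mul_sub_sq_le {τ : ℝ} (hτ0 : 0 ≤ τ) (hτ2 : τ ≤ 2) (x e : ℝ) :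
    τ * (2 * (1 - e) * e * x - (1 - e) ^ 2) ≤ 2 * e ^ 2 * x ^ 2 := by
  nlinarith [mul_nonneg hτ0 (sq_nonneg (x * e - (1 - e))),
    mul_nonneg (sub_nonneg.mpr hτ2) (sq_nonneg (x * e))]

lemma hasDerivAt_one_sub_exp_neg_sq_div {x : ℝ} (hx : x ≠ 0) :
    HasDerivAt (fun x => (1 - exp (-x)) ^ 2 / x)
      ((2 * (1 - exp (-x)) * exp (-x) * x - (1 - exp (-x)) ^ 2) / x ^ 2) x := by
  have hinner : HasDerivAt (fun x => 1 - exp (-x)) (exp (-x)) x := by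
    simpa using ((hasDerivAt_neg x).exp).const_sub 1
  exact ((hinner.fun_pow 2).fun_div (hasDerivAt_id' x) hx).congr_deriv (by norm_num)

lemma hasDerivAt_exp_neg_two_mul_add_mul_div {x : ℝ} (τ : ℝ) (hx : x ≠ 0) :
    HasDerivAt (fun x => exp (-2 * x) + τ * ((1 - exp (-x)) ^ 2 / x))
      (-2 * exp (-x) ^ 2 +
        τ * ((2 * (1 - exp (-x)) * exp (-x) * x - (1 - exp (-x)) ^ 2) / x ^ 2)) x := by
  have hexp : HasDerivAt (fun x => exp (-2 * x)) (-2 * exp (-x) ^ 2) x := by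
    refine ((hasDerivAt_id' x).const_mul (-2)).exp.congr_deriv ?_
    rw [← exp_nat_mul]
    push_cast
    ring_nf
  exact hexp.add ((hasDerivAt_one_sub_exp_neg_sq_div hx).const_mul τ)

lemma antitoneOn_exp_neg_two_mul_add_mul_div {τ : ℝ} (hτ0 : 0 ≤ τ) (hτ2 : τ ≤ 2) :
    AntitoneOn (fun x => exp (-2 * x) + τ * ((1 - exp (-x)) ^ 2 / x)) (Ioi 0) := by
  have hderiv := fun x (hx : x ∈ Ioi (0 : ℝ)) =>
    hasDerivAt_exp_neg_two_mul_add_mul_div τ (ne_of_gt hx)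
  refine antitoneOn_of_hasDerivWithinAt_nonpos (convex_Ioi 0)
    (fun x hx => (hderiv x hx).continuousAt.continuousWithinAt)
    (fun x hx => (hderiv x (interior_subset hx)).hasDerivWithinAt) fun x hx => ?_
  rw [interior_Ioi] at hx
  have hx2 : 0 < x ^ 2 := pow_pos hx 2
  have hquot : τ * ((2 * (1 - exp (-x)) * exp (-x) * x - (1 - exp (-x)) ^ 2) / x ^ 2)
      ≤ 2 * exp (-x) ^ 2 := by
    rw [← mul_div_assoc, div_le_iff₀ hx2]
    exact mul_two_mul_one_sub_mul_sub_sq_le hτ0 hτ2 x _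
  linarith

lemma exp_add_div_mul_sq_eq {τ η : ℝ} (h : ℝ) (hτ : τ ≠ 0) (hη : η ≠ 0) :
    exp (-8 * τ * η / h ^ 2) + h ^ 2 * (1 - η) / (4 * η) * (exp (-4 * τ * η / h ^ 2) - 1) ^ 2 =
      exp (-2 * (4 * τ * η / h ^ 2)) +
          τ * ((1 - exp (-(4 * τ * η / h ^ 2))) ^ 2 / (4 * τ * η / h ^ 2)) -
        h ^ 2 / 4 * (1 - exp (-(4 * τ * η / h ^ 2))) ^ 2 := by
  rw [show -8 * τ * η / h ^ 2 = -2 * (4 * τ * η / h ^ 2) by ring,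
    show -4 * τ * η / h ^ 2 = -(4 * τ * η / h ^ 2) by ring]
  field_simp
  ring

/-- For `0 < τ ≤ 2` and `h > 0`, the squared growth-factor modulus
`Q_c(τ,h,η) = exp(−8τη/h²) + (h²(1−η)/(4η))·(exp(−4τη/h²) − 1)²` of the ETD-RK1
central finite-difference scheme is nonincreasing in `η` on `(0,1]`. -/
theorem etdrk1_central_Q_antitone
    (τ h : ℝ) (hτ0 : 0 < τ) (hτ2 : τ ≤ 2) (hh : 0 < h) :
    ∀ η₁ η₂ : ℝ, 0 < η₁ → η₁ ≤ η₂ → η₂ ≤ 1 →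
      Real.exp (-8 * τ * η₂ / h ^ 2) +
          (h ^ 2 * (1 - η₂) / (4 * η₂)) * (Real.exp (-4 * τ * η₂ / h ^ 2) - 1) ^ 2 ≤
        Real.exp (-8 * τ * η₁ / h ^ 2) +
          (h ^ 2 * (1 - η₁) / (4 * η₁)) * (Real.exp (-4 * τ * η₁ / h ^ 2) - 1) ^ 2 := by
  intro η₁ η₂ hη₁ h12 _
  have hη₂ : 0 < η₂ := hη₁.trans_le h12
  have hx₁ : 0 < 4 * τ * η₁ / h ^ 2 := by positivity
  have hx₁₂ : 4 * τ * η₁ / h ^ 2 ≤ 4 * τ * η₂ / h ^ 2 := by gcongr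
  have hanti := antitoneOn_exp_neg_two_mul_add_mul_div hτ0.le hτ2 hx₁
    (hx₁.trans_le hx₁₂) hx₁₂
  have hmono := mul_le_mul_of_nonneg_left
    (sq_one_sub_exp_neg_monotoneOn hx₁.le (hx₁.le.trans hx₁₂) hx₁₂)
    (by positivity : 0 ≤ h ^ 2 / 4)
  rw [exp_add_div_mul_sq_eq h hτ0.ne' hη₁.ne', exp_add_div_mul_sq_eq h hτ0.ne' hη₂.ne']
  dsimp only at hanti hmono
  linarith
end

section
/- For every τ > 2 and every h > 0, there exists η₀ ∈ (0,1] such that Q_c(τ,h,η₀) > 1. Hence the time-step condition τ ≤ 2 is necessary for the growth-factor bound Q_c(τ,h,η) ≤ 1 to hold for all η ∈ (0,1]. -/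
/-!
Expanding both exponentials to first order in `η` gives
`Q_c(τ, h, η) = 1 + (4τ(τ - 2)/h²) η + o(η)` as `η → 0⁺`; the slope is positive when `τ > 2`,
so `Q_c > 1` for all small enough `η > 0`.
-/

open Filter Topology Real

/-- `Q_c(τ, h, η)`. -/
noncomputable def etdrk1CentralGrowthSq (τ h η : ℝ) : ℝ :=
  exp (-8 * τ * η / h ^ 2) + (h ^ 2 * (1 - η) / (4 * η)) * (exp (-4 * τ * η / h ^ 2) - 1) ^ 2

theorem tendsto_exp_mul_sub_one_div (k : ℝ) :
    Tendsto (fun x : ℝ => (exp (k * x) - 1) / x) (𝓝[≠] 0) (𝓝 k) := by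
  have hderiv : HasDerivAt (fun x : ℝ => exp (k * x)) k 0 := by
    simpa using ((hasDerivAt_id (0 : ℝ)).const_mul k).exp
  simpa [div_eq_inv_mul] using hderiv.tendsto_slope_zero

theorem exists_pos_le_one_pos_of_tendsto_nhdsGT {G : ℝ → ℝ} {L : ℝ}
    (hG : Tendsto G (𝓝[>] 0) (𝓝 L)) (hL : 0 < L) : ∃ η, 0 < η ∧ η ≤ 1 ∧ 0 < G η := by
  obtain ⟨η, hGη, hη⟩ :=
    ((hG.eventually (eventually_gt_nhds hL)).and (Ioc_mem_nhdsGT one_pos)).exists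
  exact ⟨η, hη.1, hη.2, hGη⟩

theorem tendsto_etdrk1CentralGrowthSq_sub_one_div {τ h : ℝ} (hh : h ≠ 0) :
    Tendsto (fun η => (etdrk1CentralGrowthSq τ h η - 1) / η) (𝓝[>] 0)
      (𝓝 (4 * τ * (τ - 2) / h ^ 2)) := by
  have hslope (k : ℝ) :=
    (tendsto_exp_mul_sub_one_div (k * τ / h ^ 2)).mono_left (nhdsGT_le_nhdsNE 0)
  have hweight : Tendsto (fun η : ℝ => h ^ 2 * (1 - η) / 4) (𝓝[>] 0) (𝓝 (h ^ 2 / 4)) := by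
    have : ContinuousAt (fun η : ℝ => h ^ 2 * (1 - η) / 4) 0 := by fun_prop
    simpa using this.tendsto.mono_left nhdsWithin_le_nhds
  have hlim := (hslope (-8)).add (hweight.mul ((hslope (-4)).pow 2))
  convert hlim.congr' ?_ using 2
  · field_simp
    ring
  · filter_upwards [self_mem_nhdsWithin] with η (hη : 0 < η)
    simp only [etdrk1CentralGrowthSq]
    field_simp
    ring_nf

/-- Necessity of the time-step constraint `τ ≤ 2` for the ETD-RK1 central scheme:
for every `τ > 2` and `h > 0`, there exists `η₀ ∈ (0,1]` with
`Q_c(τ,h,η₀) = exp(−8τη₀/h²) + (h²(1−η₀)/(4η₀))·(exp(−4τη₀/h²) − 1)² > 1`. -/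
theorem etdrk1_central_instability
    (τ h : ℝ) (hτ : 2 < τ) (hh : 0 < h) :
    ∃ η₀ : ℝ, 0 < η₀ ∧ η₀ ≤ 1 ∧
      1 < Real.exp (-8 * τ * η₀ / h ^ 2) +
        (h ^ 2 * (1 - η₀) / (4 * η₀)) * (Real.exp (-4 * τ * η₀ / h ^ 2) - 1) ^ 2 := by
  have hslope_pos : 0 < 4 * τ * (τ - 2) / h ^ 2 := by
    have : 0 < τ - 2 := by linarith
    positivity
  obtain ⟨η₀, hη₀, hη₀_le, hgrowth⟩ := exists_pos_le_one_pos_of_tendsto_nhdsGT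
    (tendsto_etdrk1CentralGrowthSq_sub_one_div hh.ne') hslope_pos
  have : 0 < etdrk1CentralGrowthSq τ h η₀ - 1 := (div_pos_iff_of_pos_right hη₀).mp hgrowth
  exact ⟨η₀, hη₀, hη₀_le, sub_pos.mp this⟩
end

section
/- For every h > 0, every τ with 0 < τ ≤ max{2, h}, and every η ∈ (0,1], one has Q_u(τ,h,η) := (exp(−4τη/h²) + (h/2)·(exp(−4τη/h²) − 1))² + (h²(1−η)/(4η))·(exp(−4τη/h²) − 1)² ≤ 1. (This is the stability of the ETD-RK1 time discretization of the upwind finite-difference scheme for the dimensionless advection–diffusion equation under the time-step constraint τ ≤ max{2, h}.) -/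
/-!
Write `a = exp (-x)` with `x = 4τη/h²` and `c = h²/(4η) = τ/x`. Expanding the square,
`Q_u = 1 - (1 - a)(2 + h) + (1 - a)²(1 + h + c)`, so `Q_u ≤ 1` amounts to
`(1 - a)(1 + h + τ/x) ≤ 2 + h`. Both cases of the time-step constraint reduce this to the
Padé bound `exp x ≤ (2 + x)/(2 - x)`, i.e. `(1 - exp (-x))(2 + x) ≤ 2x`: directly when `τ ≤ 2`,
and when `τ ≤ h` because `η ≤ 1` gives `x h ≤ 4`.
-/

open Real

lemma one_sub_exp_neg_mem_Icc {x : ℝ} (hx : 0 ≤ x) : 1 - exp (-x) ∈ Set.Icc 0 1 :=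
  ⟨sub_nonneg.2 (exp_le_one_iff.2 (neg_nonpos.2 hx)), sub_le_self _ (exp_pos (-x)).le⟩

lemma one_sub_exp_neg_mul_two_add_le {x : ℝ} (hx : 0 ≤ x) :
    (1 - exp (-x)) * (2 + x) ≤ 2 * x := by
  rcases lt_or_ge x 2 with hx2 | hx2
  · have hpade : exp x * (2 - x) ≤ 2 + x :=
      (le_div_iff₀ (by linarith)).1 (exp_le_two_add_div_two_sub hx hx2)
    have hprod : exp (-x) * exp x = 1 := by rw [← exp_add, neg_add_cancel, exp_zero]
    nlinarith [mul_le_mul_of_nonneg_left hpade (exp_pos (-x)).le]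
  · nlinarith [exp_pos (-x)]

lemma one_sub_exp_neg_mul_le_of_le_two {x h τ : ℝ} (hx : 0 < x) (hh : 0 ≤ h) (hτ : τ ≤ 2) :
    (1 - exp (-x)) * (1 + h + τ / x) ≤ 2 + h := by
  set f := 1 - exp (-x)
  obtain ⟨hf0, hf1⟩ := one_sub_exp_neg_mem_Icc hx.le
  have hpade : f * (2 + x) ≤ 2 * x := one_sub_exp_neg_mul_two_add_le hx.le
  have hτx : f * (τ / x) ≤ f * (2 / x) :=
    mul_le_mul_of_nonneg_left (div_le_div_of_nonneg_right hτ hx.le) hf0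
  have h2x : f * (2 / x) ≤ 2 - f := by
    rw [mul_div_assoc', div_le_iff₀ hx]
    linarith
  linarith [mul_le_mul_of_nonneg_right hf1 hh]

lemma one_sub_exp_neg_mul_le_of_le_of_mul_le_four {x h τ : ℝ} (hx : 0 < x) (hh : 0 ≤ h)
    (hτ : τ ≤ h) (hxh : x * h ≤ 4) :
    (1 - exp (-x)) * (1 + h + τ / x) ≤ 2 + h := by
  set f := 1 - exp (-x)
  obtain ⟨hf0, hf1⟩ := one_sub_exp_neg_mem_Icc hx.le
  have hpade : f * (2 + x) ≤ 2 * x := one_sub_exp_neg_mul_two_add_le hx.le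
  have hτx : f * (τ / x) ≤ f * (h / x) :=
    mul_le_mul_of_nonneg_left (div_le_div_of_nonneg_right hτ hx.le) hf0
  -- the bound is affine in `h`: interpolate between `h = 0` and `h = 4 / x`
  have hinterp : 4 * x * (f * (1 + h + h / x)) + (4 - x * h) * x * (2 - f)
      + h * (2 + x) * (2 * x - f * (2 + x)) = 4 * x * (2 + h) := by
    field_simp
    ring
  have hend : 0 ≤ (4 - x * h) * x * (2 - f) + h * (2 + x) * (2 * x - f * (2 + x)) :=
    add_nonneg (mul_nonneg (mul_nonneg (by linarith) hx.le) (by linarith))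
      (mul_nonneg (by positivity) (by linarith))
  have hmain : f * (1 + h + h / x) ≤ 2 + h := by
    refine le_of_mul_le_mul_left ?_ (by positivity : (0 : ℝ) < 4 * x)
    linarith
  linarith

lemma sq_add_mul_sq_le_one_of_one_sub_mul_le {a h c : ℝ} (ha : a ≤ 1)
    (hkey : (1 - a) * (1 + h + c) ≤ 2 + h) :
    (a + h / 2 * (a - 1)) ^ 2 + (c - h ^ 2 / 4) * (a - 1) ^ 2 ≤ 1 := by
  nlinarith [mul_nonneg (sub_nonneg.2 ha) (sub_nonneg.2 hkey)]

/-- Stability of the ETD-RK1 time discretization of the upwind finite-difference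
scheme for the dimensionless advection–diffusion equation under the time-step
constraint `τ ≤ max {2, h}`: for all `η ∈ (0,1]`, the squared growth-factor modulus
`Q_u(τ,h,η) = (exp(−4τη/h²) + (h/2)(exp(−4τη/h²) − 1))²
  + (h²(1−η)/(4η))(exp(−4τη/h²) − 1)²` is at most 1. -/
theorem etdrk1_upwind_stability
    (τ h η : ℝ) (hh : 0 < h) (hτ0 : 0 < τ) (hτ : τ ≤ max 2 h)
    (hη0 : 0 < η) (hη1 : η ≤ 1) :
    (Real.exp (-4 * τ * η / h ^ 2) +
        (h / 2) * (Real.exp (-4 * τ * η / h ^ 2) - 1)) ^ 2 +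
      (h ^ 2 * (1 - η) / (4 * η)) * (Real.exp (-4 * τ * η / h ^ 2) - 1) ^ 2 ≤ 1 := by
  set x := 4 * τ * η / h ^ 2 with hx_def
  have hx : 0 < x := by positivity
  have hexp : -4 * τ * η / h ^ 2 = -x := by rw [hx_def, neg_mul, neg_mul, neg_div]
  have hτx : τ / x = h ^ 2 / (4 * η) := by rw [hx_def]; field_simp
  have hcoef : h ^ 2 * (1 - η) / (4 * η) = h ^ 2 / (4 * η) - h ^ 2 / 4 := by field_simp
  rw [hexp, hcoef]
  refine sq_add_mul_sq_le_one_of_one_sub_mul_le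
    (exp_le_one_iff.2 (neg_nonpos.2 hx.le)) ?_
  rw [← hτx]
  rcases le_max_iff.1 hτ with hτ2 | hτh
  · exact one_sub_exp_neg_mul_le_of_le_two hx hh.le hτ2
  · have hxh : x * h ≤ 4 := by
      rw [hx_def, div_mul_eq_mul_div, div_le_iff₀ (by positivity)]
      nlinarith [mul_le_mul_of_nonneg_left hη1 hτ0.le, mul_le_mul_of_nonneg_left hτh hh.le]
    exact one_sub_exp_neg_mul_le_of_le_of_mul_le_four hx hh.le hτh hxh
end

section
/- For every τ with 0 < τ ≤ 2 and every x > 0, one has τ·(e^{−x} − 1)² < x. Equivalently, for 0 < τ ≤ 2, h > 0, and η ∈ (0,1], the quantity Q₂(τ,h,η) := (h²/(4η))·(exp(−4τη/h²) − 1)² satisfies Q₂(τ,h,η) < 1. -/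
/-!
With `t = e^{-x}`, the inequality `tanh (x/2) < x/2` reads `1 - t < (x/2)(1 + t)`; multiplying by
`2(1 - t) > 0` gives `2(1 - t)² < x(1 - t²) < x`, and `τ ≤ 2` does the rest. The statement about
`Q₂` is the same inequality at `x = 4τη/h²`, because `h²/(4η) = τ/x`.
-/

open Real

lemma one_sub_exp_neg_lt_half_mul_one_add_exp_neg {x : ℝ} (hx : 0 < x) :
    1 - exp (-x) < x / 2 * (1 + exp (-x)) := by
  let φ : ℝ → ℝ := fun y => y / 2 * (1 + exp (-y)) - (1 - exp (-y))
  have hφ' (y : ℝ) : HasDerivAt φ (exp (-y) * (exp y - 1 - y) / 2) y := by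
    have he : HasDerivAt (fun y => exp (-y)) (-exp (-y)) y := by
      simpa using (hasDerivAt_neg y).exp
    refine ((((hasDerivAt_id y).div_const 2).mul (he.const_add 1)).sub
      (he.const_sub 1)).congr_deriv ?_
    rw [mul_sub, mul_sub, ← exp_add, neg_add_cancel, exp_zero]
    simp only [id]
    ring
  have hmono : StrictMonoOn φ (Set.Ici 0) := by
    refine strictMonoOn_of_deriv_pos (convex_Ici 0)
      (fun y _ => (hφ' y).continuousAt.continuousWithinAt) fun y hy => ?_
    rw [interior_Ici] at hy
    rw [(hφ' y).deriv]
    have := add_one_lt_exp hy.ne'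
    have := exp_pos (-y)
    have : 0 < exp y - 1 - y := by linarith
    positivity
  simpa only [φ, zero_div, neg_zero, exp_zero, zero_mul, sub_self, sub_pos] using
    hmono Set.self_mem_Ici hx.le hx

lemma two_mul_sq_exp_neg_sub_one_lt {x : ℝ} (hx : 0 < x) :
    2 * (exp (-x) - 1) ^ 2 < x := by
  have hpos := exp_pos (-x)
  have hsub : 0 < 1 - exp (-x) := sub_pos.mpr (exp_lt_one_iff.mpr (neg_lt_zero.mpr hx))
  have key := one_sub_exp_neg_lt_half_mul_one_add_exp_neg hx
  calc 2 * (exp (-x) - 1) ^ 2 = 2 * (1 - exp (-x)) * (1 - exp (-x)) := by ring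
    _ < 2 * (1 - exp (-x)) * (x / 2 * (1 + exp (-x))) := by gcongr
    _ = x * (1 - exp (-x) ^ 2) := by ring
    _ < x := by linarith [mul_pos hx (pow_pos hpos 2)]

/-- For `0 < τ ≤ 2` one has `τ·(e^{−x} − 1)² < x` for all `x > 0`; equivalently,
the auxiliary quantity `Q₂(τ,h,η) = (h²/(4η))·(exp(−4τη/h²) − 1)²` from the
stability analysis of the upwind ETD-RK1 scheme satisfies `Q₂(τ,h,η) < 1`
for all `h > 0` and `η ∈ (0,1]`. -/
theorem etdrk1_upwind_Q2_lt_one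
    (τ : ℝ) (hτ0 : 0 < τ) (hτ2 : τ ≤ 2) :
    (∀ x : ℝ, 0 < x → τ * (Real.exp (-x) - 1) ^ 2 < x) ∧
      (∀ h η : ℝ, 0 < h → 0 < η → η ≤ 1 →
        (h ^ 2 / (4 * η)) * (Real.exp (-4 * τ * η / h ^ 2) - 1) ^ 2 < 1) := by
  have key (x : ℝ) (hx : 0 < x) : τ * (exp (-x) - 1) ^ 2 < x :=
    (mul_le_mul_of_nonneg_right hτ2 (sq_nonneg _)).trans_lt (two_mul_sq_exp_neg_sub_one_lt hx)
  refine ⟨key, fun h η hh hη _ => ?_⟩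
  set x := 4 * τ * η / h ^ 2 with hx_def
  have hx : 0 < x := by positivity
  have hcoef : h ^ 2 / (4 * η) = τ / x := by
    rw [hx_def]; field_simp
  rw [neg_mul, neg_mul, neg_div, ← hx_def, hcoef, div_mul_eq_mul_div, div_lt_one hx]
  exact key x hx
end

section
/- For every h > 0 and η ∈ (0,1], the function θ ↦ Q̄(h,η,θ) := (exp(−4θη/h) + (h/(2θ))·(exp(−4θη/h) − 1))² + (h²(1−η)/(4θ²η))·(exp(−4θη/h) − 1)² is nonincreasing on (0,∞), and since Q̄(h,η,θ) → 1 as θ → 0⁺, it satisfies Q̄(h,η,θ) ≤ 1 for all θ > 0. -/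
/-!
With `s = 4θη/h` and `a = 2(1 - e^{-s})/s` one has `h/(2θ) = 2η/s`, and the two squares of
`Q̄` combine into
`Q̄ = (e^{-s} - η a)² + η(1 - η) a² = (1 - η) e^{-2s} + η (a - e^{-s})²`,
a convex combination of the squares of `e^{-s}` and of `ψ(s) = a - e^{-s}`. Both are nonnegative
and nonincreasing for `s > 0` (for `ψ` because `ψ'(s) = (e^{-s}(s² + 2s + 2) - 2)/s²` and
`1 + s + s²/2 ≤ e^s`), and both tend to `1` as `s → 0⁺`. So `Q̄` decreases from the limit `1`.
-/

open Real Filter Set Topology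

theorem AntitoneOn.le_of_tendsto_nhdsGT {α β : Type*} [TopologicalSpace α] [LinearOrder α]
    [OrderTopology α] [DenselyOrdered α] [TopologicalSpace β] [Preorder β] [ClosedIciTopology β]
    {f : α → β} {a x : α} {L : β} (hf : AntitoneOn f (Ioi a)) (hL : Tendsto f (𝓝[>] a) (𝓝 L))
    (hx : a < x) : f x ≤ L := by
  have : NeBot (𝓝[>] a) := nhdsGT_neBot_of_exists_gt ⟨x, hx⟩
  refine ge_of_tendsto hL ?_
  filter_upwards [Ioo_mem_nhdsGT hx] with y hy
  exact hf hy.1 (hy.1.trans hy.2) hy.2.le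

namespace ETDRK1

noncomputable def psi (s : ℝ) : ℝ := 2 * (1 - exp (-s)) / s - exp (-s)

noncomputable def reducedQbar (η s : ℝ) : ℝ := (1 - η) * exp (-s) ^ 2 + η * psi s ^ 2

noncomputable def Qbar (h η θ : ℝ) : ℝ :=
  (exp (-4 * θ * η / h) + (h / (2 * θ)) * (exp (-4 * θ * η / h) - 1)) ^ 2 +
    (h ^ 2 * (1 - η) / (4 * θ ^ 2 * η)) * (exp (-4 * θ * η / h) - 1) ^ 2

theorem hasDerivAt_exp_neg (s : ℝ) : HasDerivAt (fun x ↦ exp (-x)) (-exp (-s)) s := by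
  simpa using (hasDerivAt_neg s).exp

theorem hasDerivAt_psi {s : ℝ} (hs : s ≠ 0) :
    HasDerivAt psi ((exp (-s) * (s ^ 2 + 2 * s + 2) - 2) / s ^ 2) s := by
  have hnum : HasDerivAt (fun x ↦ 2 * (1 - exp (-x))) (2 * exp (-s)) s := by
    simpa using ((hasDerivAt_exp_neg s).const_sub 1).const_mul 2
  refine ((hnum.div (hasDerivAt_id' s) hs).sub (hasDerivAt_exp_neg s)).congr_deriv ?_
  field_simp
  ring

theorem psi_antitoneOn : AntitoneOn psi (Ioi 0) := by
  refine antitoneOn_of_hasDerivWithinAt_nonpos (convex_Ioi 0)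
    (fun s hs ↦ (hasDerivAt_psi (ne_of_gt hs)).continuousAt.continuousWithinAt)
    (fun s hs ↦ (hasDerivAt_psi (ne_of_gt (interior_subset hs))).hasDerivWithinAt) ?_
  intro s hs
  have hquad : 1 + s + s ^ 2 / 2 ≤ exp s := quadratic_le_exp_of_nonneg (interior_subset hs).le
  have hinv : exp s * exp (-s) = 1 := by rw [← exp_add, add_neg_cancel, exp_zero]
  refine div_nonpos_of_nonpos_of_nonneg ?_ (sq_nonneg s)
  nlinarith [exp_pos (-s)]

theorem psi_nonneg {s : ℝ} (hs : 0 < s) : 0 ≤ psi s := by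
  have hinv : exp s * exp (-s) = 1 := by rw [← exp_add, add_neg_cancel, exp_zero]
  have hlin : exp (-s) * (1 + s) ≤ 1 := by nlinarith [add_one_le_exp s, exp_pos (-s)]
  rw [psi, sub_nonneg, le_div_iff₀ hs]
  nlinarith [exp_pos (-s)]

theorem tendsto_exp_neg_nhdsNE_zero : Tendsto (fun s ↦ exp (-s)) (𝓝[≠] 0) (𝓝 1) := by
  simpa using (hasDerivAt_exp_neg 0).continuousAt.tendsto.mono_left nhdsWithin_le_nhds

theorem tendsto_psi_nhdsNE_zero : Tendsto psi (𝓝[≠] 0) (𝓝 1) := by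
  -- `(1 - e^{-s})/s` is minus the difference quotient of `x ↦ e^{-x}` at `0`
  have hslope := hasDerivAt_iff_tendsto_slope.mp (hasDerivAt_exp_neg 0)
  have hlim := (hslope.const_mul (-2)).sub tendsto_exp_neg_nhdsNE_zero
  norm_num at hlim
  refine hlim.congr fun s ↦ ?_
  simp only [slope_fun_def_field, psi, neg_zero, exp_zero, sub_zero]
  ring

theorem reducedQbar_antitoneOn {η : ℝ} (hη0 : 0 ≤ η) (hη1 : η ≤ 1) :
    AntitoneOn (reducedQbar η) (Ioi 0) := by
  intro s₁ hs₁ s₂ hs₂ hs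
  have hexp : exp (-s₂) ^ 2 ≤ exp (-s₁) ^ 2 := by gcongr
  have hpsi : psi s₂ ^ 2 ≤ psi s₁ ^ 2 := by
    gcongr
    exacts [psi_nonneg hs₂, psi_antitoneOn hs₁ hs₂ hs]
  have h1η : 0 ≤ 1 - η := sub_nonneg.mpr hη1
  unfold reducedQbar
  gcongr

theorem tendsto_reducedQbar_nhdsNE_zero (η : ℝ) : Tendsto (reducedQbar η) (𝓝[≠] 0) (𝓝 1) := by
  have hlim := ((tendsto_exp_neg_nhdsNE_zero.pow 2).const_mul (1 - η)).add
    ((tendsto_psi_nhdsNE_zero.pow 2).const_mul η)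
  rwa [one_pow, mul_one, mul_one, sub_add_cancel] at hlim

theorem Qbar_eq_reducedQbar {h η θ : ℝ} (hη : η ≠ 0) :
    Qbar h η θ = reducedQbar η (4 * η / h * θ) := by
  have harg : -(4 * η / h * θ) = -4 * θ * η / h := by ring
  rw [reducedQbar, psi, harg, Qbar]
  field_simp
  ring

variable {h η : ℝ}

theorem Qbar_antitoneOn (hh : 0 < h) (hη0 : 0 < η) (hη1 : η ≤ 1) :
    AntitoneOn (Qbar h η) (Ioi 0) := by
  intro θ₁ hθ₁ θ₂ hθ₂ hθ
  have hc : 0 < 4 * η / h := by positivity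
  rw [Qbar_eq_reducedQbar hη0.ne', Qbar_eq_reducedQbar hη0.ne']
  exact reducedQbar_antitoneOn hη0.le hη1 (mul_pos hc hθ₁) (mul_pos hc hθ₂)
    (mul_le_mul_of_nonneg_left hθ hc.le)

theorem tendsto_Qbar_nhdsGT_zero (hh : 0 < h) (hη0 : 0 < η) :
    Tendsto (Qbar h η) (𝓝[>] 0) (𝓝 1) := by
  have hscale : Tendsto (fun θ ↦ 4 * η / h * θ) (𝓝[>] 0) (𝓝[≠] 0) := by
    refine tendsto_nhdsWithin_of_tendsto_nhds_of_eventually_within _ ?_ ?_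
    · simpa using ((continuous_const_mul (4 * η / h)).tendsto 0).mono_left nhdsWithin_le_nhds
    · filter_upwards [self_mem_nhdsWithin] with θ (hθ : 0 < θ)
      exact ne_of_gt (by positivity)
  exact ((tendsto_reducedQbar_nhdsNE_zero η).comp hscale).congr
    fun θ ↦ (Qbar_eq_reducedQbar hη0.ne').symm

end ETDRK1

/-- For `h > 0` and `η ∈ (0,1]`, the auxiliary function
`Q̄(h,η,θ) = (exp(−4θη/h) + (h/(2θ))(exp(−4θη/h) − 1))²
  + (h²(1−η)/(4θ²η))(exp(−4θη/h) − 1)²`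
is nonincreasing in `θ` on `(0,∞)`, tends to `1` as `θ → 0⁺`, and hence is
bounded above by `1` for all `θ > 0`. -/
theorem etdrk1_upwind_Qbar_antitone_and_le_one
    (h η : ℝ) (hh : 0 < h) (hη0 : 0 < η) (hη1 : η ≤ 1) :
    (∀ θ₁ θ₂ : ℝ, 0 < θ₁ → θ₁ ≤ θ₂ →
      (Real.exp (-4 * θ₂ * η / h) + (h / (2 * θ₂)) * (Real.exp (-4 * θ₂ * η / h) - 1)) ^ 2 +
          (h ^ 2 * (1 - η) / (4 * θ₂ ^ 2 * η)) * (Real.exp (-4 * θ₂ * η / h) - 1) ^ 2 ≤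
        (Real.exp (-4 * θ₁ * η / h) + (h / (2 * θ₁)) * (Real.exp (-4 * θ₁ * η / h) - 1)) ^ 2 +
          (h ^ 2 * (1 - η) / (4 * θ₁ ^ 2 * η)) * (Real.exp (-4 * θ₁ * η / h) - 1) ^ 2) ∧
    Filter.Tendsto
      (fun θ : ℝ =>
        (Real.exp (-4 * θ * η / h) + (h / (2 * θ)) * (Real.exp (-4 * θ * η / h) - 1)) ^ 2 +
          (h ^ 2 * (1 - η) / (4 * θ ^ 2 * η)) * (Real.exp (-4 * θ * η / h) - 1) ^ 2)
      (nhdsWithin 0 (Set.Ioi 0)) (nhds 1) ∧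
    (∀ θ : ℝ, 0 < θ →
      (Real.exp (-4 * θ * η / h) + (h / (2 * θ)) * (Real.exp (-4 * θ * η / h) - 1)) ^ 2 +
        (h ^ 2 * (1 - η) / (4 * θ ^ 2 * η)) * (Real.exp (-4 * θ * η / h) - 1) ^ 2 ≤ 1) := by
  have hanti := ETDRK1.Qbar_antitoneOn hh hη0 hη1
  have hlim := ETDRK1.tendsto_Qbar_nhdsGT_zero hh hη0
  exact ⟨fun θ₁ θ₂ hθ₁ hθ ↦ hanti hθ₁ (hθ₁.trans_le hθ) hθ, hlim,
    fun θ hθ ↦ hanti.le_of_tendsto_nhdsGT hlim hθ⟩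
end

section
/- For every h > 0 and every η ∈ (0,1], one has Q_u(h,h,η) ≤ 1; that is, (exp(−4η/h) + (h/2)·(exp(−4η/h) − 1))² + (h²(1−η)/(4η))·(exp(−4η/h) − 1)² ≤ 1. (This is the stability of the upwind ETD-RK1 scheme when the time step equals the mesh size, τ = h.) -/
/-!
Write `E = exp (-4η/h)` and `D = 1 - E ∈ [0, 1)`. Expanding the square,
`4η (Q_u - 1) = D · (D (4η + 4ηh + h²) - 4η (2 + h))`, so it suffices that
`D (4η + 4ηh + h²) ≤ 4η (2 + h)`. The (1,1)-Padé lower bound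
`exp (-x) ≥ (2 - x)/(2 + x)` at `x = 4η/h` gives `(h + 2η) D ≤ 4η`, and
`4η + 4ηh + h² ≤ (h + 2η)(2 + h)` is exactly `η ≤ 1`.
-/

open Real

lemma two_sub_le_two_add_mul_exp_neg {x : ℝ} (hx : 0 ≤ x) : 2 - x ≤ (2 + x) * exp (-x) := by
  let f : ℝ → ℝ := fun t ↦ t - 2 + (2 + t) * exp (-t)
  have hf : ∀ t, HasDerivAt f (1 - (1 + t) * exp (-t)) t := fun t ↦ by
    have hexp : HasDerivAt (fun s : ℝ ↦ exp (-s)) (-exp (-t)) t := by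
      simpa using ((hasDerivAt_id t).neg).exp
    exact (((hasDerivAt_id t).sub_const 2).add
      (((hasDerivAt_id t).const_add 2).mul hexp)).congr_deriv (by rw [id]; ring)
  have hf_mono : Monotone f := by
    refine monotone_of_deriv_nonneg (fun t ↦ (hf t).differentiableAt) fun t ↦ ?_
    rw [(hf t).deriv, sub_nonneg]
    calc (1 + t) * exp (-t) ≤ exp t * exp (-t) := by gcongr; linarith [add_one_le_exp t]
      _ = 1 := by rw [← exp_add, add_neg_cancel, exp_zero]
  have := hf_mono hx
  simp only [f, neg_zero, exp_zero] at this
  linarith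

lemma upwind_growth_sq_le_one {h η E : ℝ} (hh : 0 ≤ h) (hη0 : 0 < η) (hη1 : η ≤ 1)
    (hE : E ≤ 1) (hpade : h - 2 * η ≤ (h + 2 * η) * E) :
    (E + h / 2 * (E - 1)) ^ 2 + h ^ 2 * (1 - η) / (4 * η) * (E - 1) ^ 2 ≤ 1 := by
  set D := 1 - E with hD
  have hD0 : 0 ≤ D := sub_nonneg.mpr hE
  have hDη : D * (4 * η + 4 * η * h + h ^ 2) ≤ 4 * η * (2 + h) := calc
    D * (4 * η + 4 * η * h + h ^ 2) ≤ D * ((h + 2 * η) * (2 + h)) := by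
      gcongr
      nlinarith [mul_le_mul_of_nonneg_left hη1 hh]
    _ = (h + 2 * η) * D * (2 + h) := by ring
    _ ≤ 4 * η * (2 + h) := by
      have : (h + 2 * η) * D ≤ 4 * η := by linear_combination hpade
      gcongr
  have hexpand : (E + h / 2 * (E - 1)) ^ 2 + h ^ 2 * (1 - η) / (4 * η) * (E - 1) ^ 2
      = 1 + D * (D * (4 * η + 4 * η * h + h ^ 2) - 4 * η * (2 + h)) / (4 * η) := by
    rw [hD]
    field_simp
    ring
  rw [hexpand, add_le_iff_nonpos_right]
  exact div_nonpos_of_nonpos_of_nonneg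
    (mul_nonpos_of_nonneg_of_nonpos hD0 (sub_nonpos.mpr hDη)) (by positivity)

/-- Stability of the upwind ETD-RK1 scheme when the time step equals the mesh
size (`τ = h`): for every `h > 0` and `η ∈ (0,1]`,
`Q_u(h,h,η) = (exp(−4η/h) + (h/2)(exp(−4η/h) − 1))²
  + (h²(1−η)/(4η))(exp(−4η/h) − 1)² ≤ 1`. -/
theorem etdrk1_upwind_stability_tau_eq_h
    (h η : ℝ) (hh : 0 < h) (hη0 : 0 < η) (hη1 : η ≤ 1) :
    (Real.exp (-4 * η / h) + (h / 2) * (Real.exp (-4 * η / h) - 1)) ^ 2 +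
      (h ^ 2 * (1 - η) / (4 * η)) * (Real.exp (-4 * η / h) - 1) ^ 2 ≤ 1 := by
  have hx : 0 ≤ 4 * η / h := by positivity
  have hexp : exp (-4 * η / h) = exp (-(4 * η / h)) := by rw [neg_mul, neg_div]
  have hE : exp (-4 * η / h) ≤ 1 := by
    rw [hexp, exp_le_one_iff]
    linarith
  have hpade : h - 2 * η ≤ (h + 2 * η) * exp (-4 * η / h) := calc
    h - 2 * η = h / 2 * (2 - 4 * η / h) := by field_simp; ring
    _ ≤ h / 2 * ((2 + 4 * η / h) * exp (-(4 * η / h))) := by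
      gcongr
      exact two_sub_le_two_add_mul_exp_neg hx
    _ = (h + 2 * η) * exp (-4 * η / h) := by rw [hexp]; field_simp; ring
  exact upwind_growth_sq_le_one hh.le hη0 hη1 hE hpade
end

section
/- For every τ > 2, there exists η > 0 such that Q̂(τ,η) > 1, where Q̂(τ,η) = exp(−2τη) + (1/η)·(exp(−τη) − 1)². Hence the condition τ ≤ 2 is necessary for the growth-factor bound Q̂(τ,η) ≤ 1 to hold for all η > 0. -/
/-!
Write `e = exp (-τη)`. Since `exp (-2τη) = e²`, one has
`Q̂(τ,η) - 1 = (1 - e) * ((1 + η) * (1 - e) - 2η) / η`, so `Q̂ > 1` as soon as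
`1 - e > 2η / (1 + η)`. The bound `1 - exp (-x) ≥ x / (1 + x)` reduces this to
`τη / (1 + τη) > 2η / (1 + η)`, i.e. `τη < τ - 2`, which holds for `η = (τ - 2) / (2τ)`.
-/

open Real

/-- The paper's `Q̂(τ, η)`, with `η = ξ²`. -/
noncomputable def etdrk1GrowthSq (τ η : ℝ) : ℝ :=
  exp (-2 * τ * η) + (1 / η) * (exp (-τ * η) - 1) ^ 2

lemma one_add_mul_exp_neg_le_one (x : ℝ) : (1 + x) * exp (-x) ≤ 1 := by
  calc (1 + x) * exp (-x) ≤ exp x * exp (-x) := by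
        gcongr
        linarith [add_one_le_exp x]
    _ = 1 := by rw [← exp_add, add_neg_cancel, exp_zero]

lemma one_lt_etdrk1GrowthSq {τ η : ℝ} (hη : 0 < η)
    (h : 2 * η < (1 + η) * (1 - exp (-τ * η))) : 1 < etdrk1GrowthSq τ η := by
  set e := exp (-τ * η)
  have he : 0 < 1 - e := by nlinarith
  have hsq : exp (-2 * τ * η) = e ^ 2 := by
    rw [← exp_nat_mul]
    ring_nf
  have hQ : etdrk1GrowthSq τ η = e ^ 2 + (1 / η) * (e - 1) ^ 2 := by
    rw [etdrk1GrowthSq, hsq]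
  have hgap : etdrk1GrowthSq τ η - 1 = (1 - e) * ((1 + η) * (1 - e) - 2 * η) / η := by
    rw [hQ]
    field_simp
    ring
  have hpos : 0 < etdrk1GrowthSq τ η - 1 := by
    rw [hgap]
    exact div_pos (mul_pos he (by linarith)) hη
  linarith

/-- Necessity of the time-step constraint `τ ≤ 2` for the semidiscrete ETD-RK1
scheme: for every `τ > 2` there exists `η > 0` with
`Q̂(τ,η) = exp(−2τη) + (1/η)·(exp(−τη) − 1)² > 1`. -/
theorem etdrk1_semidiscrete_instability (τ : ℝ) (hτ : 2 < τ) :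
    ∃ η : ℝ, 0 < η ∧
      1 < Real.exp (-2 * τ * η) + (1 / η) * (Real.exp (-τ * η) - 1) ^ 2 := by
  have hτ0 : 0 < τ := by linarith
  set η := (τ - 2) / (2 * τ) with hη_def
  have hη : 0 < η := div_pos (by linarith) (by positivity)
  have hτη : τ * η = (τ - 2) / 2 := by
    rw [hη_def]
    field_simp
  have hexp : (τ - 2) / τ ≤ 1 - exp (-τ * η) := by
    have h := one_add_mul_exp_neg_le_one (τ * η)
    rw [hτη] at h
    rw [neg_mul, hτη]
    rw [div_le_iff₀ hτ0]
    linarith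
  refine ⟨η, hη, one_lt_etdrk1GrowthSq hη ?_⟩
  calc 2 * η = (τ - 2) / τ := by
        rw [hη_def]
        field_simp
    _ < (1 + η) * ((τ - 2) / τ) :=
        lt_mul_of_one_lt_left (div_pos (by linarith) hτ0) (by linarith)
    _ ≤ (1 + η) * (1 - exp (-τ * η)) := by gcongr
end

section
/- For every τ with 0 < τ ≤ 2, every h > 0, and every η ∈ [0,1], one has 1 + (4τ²/h²)·η(1−η) ≤ (1 + (4τ/h²)·η)²; equivalently, the squared growth-factor modulus Q_ic(τ,h,η) := (1 + (4τ²/h²)η(1−η)) / (1 + (4τ/h²)η)² is at most 1. (This is the stability of the first-order IMEX-RK (ARS(1,1,1)) time discretization of the central finite-difference scheme for the dimensionless advection–diffusion equation under τ ≤ 2.) -/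
/-! With `a = (4τ/h²)η ≥ 0` the left-hand side is `1 + τ(1-η)·a`, while the right-hand side is
`1 + 2a + a²`; so the inequality holds as soon as `τ(1-η) ≤ 2`, which follows from `τ ≤ 2`
and `τη ≥ 0`. -/

theorem one_add_mul_le_one_add_sq {a c : ℝ} (ha : 0 ≤ a) (hc : c ≤ 2) :
    1 + c * a ≤ (1 + a) ^ 2 := by
  nlinarith

theorem imexrk1_central_stability_general
    (τ h η : ℝ) (hτ0 : 0 < τ) (hτ2 : τ ≤ 2)
    (hη0 : 0 ≤ η) :
    1 + (4 * τ ^ 2 / h ^ 2) * (η * (1 - η)) ≤ (1 + (4 * τ / h ^ 2) * η) ^ 2 := by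
  have ha : 0 ≤ (4 * τ / h ^ 2) * η := by positivity
  have hc : τ * (1 - η) ≤ 2 := by linarith [mul_nonneg hτ0.le hη0]
  calc 1 + (4 * τ ^ 2 / h ^ 2) * (η * (1 - η))
      = 1 + τ * (1 - η) * ((4 * τ / h ^ 2) * η) := by ring
    _ ≤ (1 + (4 * τ / h ^ 2) * η) ^ 2 := one_add_mul_le_one_add_sq ha hc

/-- Stability of the first-order IMEX-RK (ARS(1,1,1)) time discretization of the
central finite-difference scheme for the dimensionless advection–diffusion
equation under `τ ≤ 2`: for all `h > 0` and `η ∈ [0,1]`,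
`1 + (4τ²/h²)·η(1−η) ≤ (1 + (4τ/h²)·η)²`. -/
theorem imexrk1_central_stability
    (τ h η : ℝ) (hτ0 : 0 < τ) (hτ2 : τ ≤ 2) (hh : 0 < h)
    (hη0 : 0 ≤ η) (hη1 : η ≤ 1) :
    1 + (4 * τ ^ 2 / h ^ 2) * (η * (1 - η)) ≤ (1 + (4 * τ / h ^ 2) * η) ^ 2 :=
  imexrk1_central_stability_general τ h η hτ0 hτ2 hη0
end

section
/- For every h > 0, every τ with 0 < τ ≤ 2 + h, and every η ∈ [0,1], one has (1 − (2τ/h)η)² + (4τ²/h²)·η(1−η) ≤ (1 + (4τ/h²)·η)²; equivalently, the squared growth-factor modulus Q_iu(τ,h,η) := ((1 − (2τ/h)η)² + (4τ²/h²)η(1−η)) / (1 + (4τ/h²)η)² is at most 1. (This is the stability of the first-order IMEX-RK (ARS(1,1,1)) time discretization of the upwind finite-difference scheme for the dimensionless advection–diffusion equation under τ ≤ 2 + h.) -/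
theorem imexrk1_upwind_stability_defect_eq {K : Type*} [Field K] (τ h η : K) (hh : h ≠ 0) :
    (1 + (4 * τ / h ^ 2) * η) ^ 2 -
        ((1 - (2 * τ / h) * η) ^ 2 + (4 * τ ^ 2 / h ^ 2) * (η * (1 - η))) =
      (4 * τ * η / h ^ 4) * (h ^ 2 * (2 + h - τ) + 4 * τ * η) := by
  field_simp
  ring

theorem imexrk1_upwind_stability_general
    (τ h η : ℝ) (hh : 0 < h) (hτ0 : 0 < τ) (hτ : τ ≤ 2 + h)
    (hη0 : 0 ≤ η) :
    (1 - (2 * τ / h) * η) ^ 2 + (4 * τ ^ 2 / h ^ 2) * (η * (1 - η)) ≤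
      (1 + (4 * τ / h ^ 2) * η) ^ 2 := by
  rw [← sub_nonneg, imexrk1_upwind_stability_defect_eq τ h η hh.ne']
  have hmargin : 0 ≤ 2 + h - τ := sub_nonneg.mpr hτ
  positivity

/-- Stability of the first-order IMEX-RK (ARS(1,1,1)) time discretization of the
upwind finite-difference scheme for the dimensionless advection–diffusion
equation under `τ ≤ 2 + h`: for all `h > 0` and `η ∈ [0,1]`,
`(1 − (2τ/h)η)² + (4τ²/h²)·η(1−η) ≤ (1 + (4τ/h²)·η)²`. -/
theorem imexrk1_upwind_stability
    (τ h η : ℝ) (hh : 0 < h) (hτ0 : 0 < τ) (hτ : τ ≤ 2 + h)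
    (hη0 : 0 ≤ η) (hη1 : η ≤ 1) :
    (1 - (2 * τ / h) * η) ^ 2 + (4 * τ ^ 2 / h ^ 2) * (η * (1 - η)) ≤
      (1 + (4 * τ / h ^ 2) * η) ^ 2 :=
  imexrk1_upwind_stability_general τ h η hh hτ0 hτ hη0
end
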